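/- For x ≥ 2, let n'(x) be the index with #(n'(x)) ≤ x < #(n'(x)+1), where #(n) is the n-th primorial, and define log₋(x) = log(#(n'(x)−1)) and log₊(x) = log(#(n'(x)+1)). Then lim_{x→∞} log₋(x)/log₊(x) = 1. -/

import Mathlib

/-!
The primes `p (n+1)` and `p (n+2)` separating `#(n)` from `#(n+2)` are at most `2 ^ (n+2)` by
Bertrand's postulate, so `log #(n+2) - log #(n) = O(n)`. On the other hand `p i ≥ i`, so
`#(n) ≥ n!` and Stirling gives `log #(n) ≥ n (log n - 1)`. Hence `log #(n) / log #(n+2) → 1`;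
since `x < #(n' x + 1)` forces `n' x → ∞`, the claim follows with `n = n' x - 1`.
-/

open Filter Real Topology

/-- The n-th prime number, 1-indexed: `p 1 = 2`, `p 2 = 3`, ... -/
noncomputable def p (n : ℕ) : ℕ := Nat.nth Nat.Prime (n - 1)

/-- The n-th primorial: `primor n = ∏_{i=1}^n p i`. -/
noncomputable def primor (n : ℕ) : ℕ := ∏ i ∈ Finset.Icc 1 n, p i

theorem Filter.Tendsto.div_nhds_one_of_sub_div {α : Type*} {l : Filter α} {a b : α → ℝ}
    (ha : ∀ᶠ x in l, a x ≠ 0) (h : Tendsto (fun x => (b x - a x) / a x) l (𝓝 0)) :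
    Tendsto (fun x => a x / b x) l (𝓝 1) := by
  have h' := (h.const_add 1).inv₀ (by norm_num)
  rw [add_zero, inv_one] at h'
  refine h'.congr' ?_
  filter_upwards [ha] with x hx
  rw [one_add_div hx, add_sub_cancel, inv_div]

lemma p_prime (n : ℕ) : (p n).Prime := Nat.prime_nth_prime _

lemma le_p (n : ℕ) : n ≤ p n := by
  have := Nat.add_two_le_nth_prime (n - 1)
  unfold p
  omega

lemma p_succ_le_two_mul {n : ℕ} (hn : 1 ≤ n) : p (n + 1) ≤ 2 * p n := by
  obtain ⟨q, hq, hpq, hq2⟩ := Nat.exists_prime_lt_and_le_two_mul (p n) (p_prime n).ne_zero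
  refine le_trans ?_ hq2
  by_contra! hqp
  have := Nat.le_nth_of_lt_nth_succ (p := Nat.Prime) (k := n - 1)
    (by rwa [Nat.sub_add_cancel hn]) hq
  exact absurd hpq (not_lt.2 this)

lemma p_le_two_pow {n : ℕ} (hn : 1 ≤ n) : p n ≤ 2 ^ n := by
  induction n, hn using Nat.le_induction with
  | base => simp [p, Nat.nth_prime_zero_eq_two]
  | succ n hn ih => rw [pow_succ]; linarith [p_succ_le_two_mul hn]

lemma primor_zero : primor 0 = 1 := rfl

lemma primor_succ (n : ℕ) : primor (n + 1) = primor n * p (n + 1) :=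
  Finset.prod_Icc_succ_top (by omega) _

lemma primor_pos (n : ℕ) : 0 < primor n :=
  Finset.prod_pos fun i _ => (p_prime i).pos

lemma primor_mono : Monotone primor :=
  monotone_nat_of_le_succ fun n => by
    rw [primor_succ]
    exact Nat.le_mul_of_pos_right _ (p_prime _).pos

lemma factorial_le_primor (n : ℕ) : n.factorial ≤ primor n := by
  induction n with
  | zero => simp [primor_zero]
  | succ n ih =>
    rw [Nat.factorial_succ, primor_succ, mul_comm]
    exact Nat.mul_le_mul ih (le_p _)

lemma mul_log_sub_one_le_log_primor (n : ℕ) : n * (log n - 1) ≤ log (primor n) := by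
  rcases Nat.eq_zero_or_pos n with rfl | hn
  · simp [primor_zero]
  calc (n : ℝ) * (log n - 1)
      ≤ n * log n - n + log n / 2 + log (2 * π) / 2 := by
        have : 0 ≤ log (n : ℝ) := log_natCast_nonneg n
        have : 0 ≤ log (2 * π) := log_nonneg (by nlinarith [pi_gt_three])
        linarith
    _ ≤ log n.factorial := Stirling.le_log_factorial_stirling hn.ne'
    _ ≤ log (primor n) := log_le_log (by positivity) (mod_cast factorial_le_primor n)

lemma log_primor_succ (n : ℕ) : log (primor (n + 1)) = log (primor n) + log (p (n + 1)) := by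
  rw [primor_succ, Nat.cast_mul,
    log_mul (mod_cast (primor_pos n).ne') (mod_cast (p_prime _).ne_zero)]

lemma log_primor_add_two_sub (n : ℕ) :
    log (primor (n + 2)) - log (primor n) = log (p (n + 1)) + log (p (n + 2)) := by
  rw [log_primor_succ, log_primor_succ]
  ring

lemma log_p_le {n : ℕ} (hn : 1 ≤ n) : log (p n) ≤ n * log 2 := by
  rw [← log_pow]
  exact log_le_log (mod_cast (p_prime n).pos) (mod_cast p_le_two_pow hn)

lemma tendsto_log_primor_div_log_primor_add_two :
    Tendsto (fun n => log (primor n) / log (primor (n + 2))) atTop (𝓝 1) := by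
  have hlog : Tendsto (fun n : ℕ => log n - 1) atTop atTop :=
    tendsto_atTop_add_const_right _ _ (tendsto_log_atTop.comp tendsto_natCast_atTop_atTop)
  have hlarge : ∀ᶠ n : ℕ in atTop, 0 < log (n : ℝ) - 1 ∧ 1 ≤ n :=
    (hlog.eventually_gt_atTop 0).and (eventually_ge_atTop 1)
  have hpos : ∀ᶠ n : ℕ in atTop, 0 < log (primor n) := by
    filter_upwards [hlarge] with n ⟨hn, hn1⟩
    have : (0 : ℝ) < n := mod_cast hn1
    nlinarith [mul_log_sub_one_le_log_primor n]
  refine Tendsto.div_nhds_one_of_sub_div (hpos.mono fun n hn => hn.ne') ?_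
  refine tendsto_of_tendsto_of_tendsto_of_le_of_le' tendsto_const_nhds
    (tendsto_const_nhds.div_atTop hlog : Tendsto (fun n : ℕ => 5 * log 2 / (log n - 1)) _ _)
    ?_ ?_
  · filter_upwards [hpos] with n hn
    rw [log_primor_add_two_sub]
    positivity
  · filter_upwards [hlarge] with n ⟨hn, hn1⟩
    have h1 := log_p_le (n := n + 1) (by omega)
    have h2 := log_p_le (n := n + 2) (by omega)
    push_cast at h1 h2
    have : (1 : ℝ) ≤ n := mod_cast hn1
    have := log_nonneg (one_le_two (α := ℝ))
    rw [log_primor_add_two_sub]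
    calc (log (p (n + 1)) + log (p (n + 2))) / log (primor n)
        ≤ (n * (5 * log 2)) / (n * (log n - 1)) :=
          div_le_div₀ (by positivity) (by nlinarith) (by positivity)
            (mul_log_sub_one_le_log_primor n)
      _ = 5 * log 2 / (log n - 1) := mul_div_mul_left _ _ (by positivity)

lemma tendsto_atTop_of_lt_primor_succ {f : ℝ → ℕ}
    (hf : ∀ᶠ x in atTop, x < (primor (f x + 1) : ℝ)) : Tendsto f atTop atTop := by
  refine tendsto_atTop.2 fun b => ?_
  filter_upwards [hf, eventually_ge_atTop (primor b : ℝ)] with x hlt hge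
  by_contra! hfb
  have : (primor (f x + 1) : ℝ) ≤ primor b := mod_cast primor_mono hfb
  linarith

theorem stmt_11 (n' : ℝ → ℕ)
    (hn' : ∀ x : ℝ, 2 ≤ x → ((primor (n' x) : ℝ) ≤ x ∧ x < (primor (n' x + 1) : ℝ))) :
    Tendsto (fun x : ℝ => Real.log (primor (n' x - 1)) / Real.log (primor (n' x + 1)))
      atTop (nhds 1) := by
  have htop : Tendsto n' atTop atTop :=
    tendsto_atTop_of_lt_primor_succ <|
      (eventually_ge_atTop 2).mono fun x hx => (hn' x hx).2
  refine (tendsto_log_primor_div_log_primor_add_two.comp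
    ((tendsto_sub_atTop_nat 1).comp htop)).congr' ?_
  filter_upwards [htop.eventually_ge_atTop 1] with x hx
  simp only [Function.comp_apply, show n' x - 1 + 2 = n' x + 1 by omega]
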